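/- arXiv:2511.05076 — 4 statements merged into one kernel-verified Lean document; each statement's English description precedes it below -/
import Mathlib

section
/- Let f(z) = 3/(1 - z) - conj(z)/(1 - |z|²) for z ∈ 𝔻. Then sup_{z∈𝔻} (1 - |z|²)|f(z)| = 5. -/
/-! Writing `|z|² = z z̄`, one finds
`(1 - |z|²) (3/(1 - z) - z̄/(1 - |z|²)) = 3 (1 - z̄)/(1 - z) + 2 z̄`,
whose modulus is at most `3 + 2|z| < 5`, with equality at every `z = r ∈ [0, 1)`. -/

open Complex Metric ComplexConjugate

noncomputable def logHarmonicPreSchwarzian (z : ℂ) : ℂ :=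
  3 / (1 - z) - conj z / ((1 : ℂ) - (‖z‖ : ℂ) ^ 2)

theorem one_sub_sq_norm_mul_div_one_sub_sub_conj_div (c z : ℂ) (hz₁ : 1 - z ≠ 0)
    (hz : (1 : ℂ) - (‖z‖ : ℂ) ^ 2 ≠ 0) :
    (1 - (‖z‖ : ℂ) ^ 2) * (c / (1 - z) - conj z / (1 - (‖z‖ : ℂ) ^ 2))
      = c * (conj (1 - z) / (1 - z)) + (c - 1) * conj z := by
  rw [← mul_conj'] at hz ⊢
  field_simp
  simp only [map_sub, map_one]
  ring

theorem norm_conj_div_self {w : ℂ} (hw : w ≠ 0) : ‖conj w / w‖ = 1 := by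
  rw [norm_div, norm_conj, div_self (norm_ne_zero_iff.mpr hw)]

theorem one_sub_sq_norm_mul_norm_logHarmonicPreSchwarzian {z : ℂ} (hz : ‖z‖ < 1) :
    (1 - ‖z‖ ^ 2) * ‖logHarmonicPreSchwarzian z‖
      = ‖3 * (conj (1 - z) / (1 - z)) + 2 * conj z‖ := by
  have hpos : 0 < 1 - ‖z‖ ^ 2 := by nlinarith [norm_nonneg z]
  have hz₁ : 1 - z ≠ 0 := sub_ne_zero.mpr (by rintro rfl; simp at hz)
  have hcast : (1 : ℂ) - (‖z‖ : ℂ) ^ 2 = ((1 - ‖z‖ ^ 2 : ℝ) : ℂ) := by push_cast; ring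
  have hne : (1 : ℂ) - (‖z‖ : ℂ) ^ 2 ≠ 0 := by
    rw [hcast]; exact ofReal_ne_zero.mpr hpos.ne'
  have key := one_sub_sq_norm_mul_div_one_sub_sub_conj_div 3 z hz₁ hne
  rw [hcast] at key
  rw [logHarmonicPreSchwarzian, ← abs_of_pos hpos, ← Real.norm_eq_abs, ← norm_real,
    ← norm_mul, hcast, key]
  norm_num

theorem one_sub_sq_norm_mul_norm_logHarmonicPreSchwarzian_le {z : ℂ} (hz : ‖z‖ < 1) :
    (1 - ‖z‖ ^ 2) * ‖logHarmonicPreSchwarzian z‖ ≤ 3 + 2 * ‖z‖ := by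
  have hz₁ : 1 - z ≠ 0 := sub_ne_zero.mpr (by rintro rfl; simp at hz)
  rw [one_sub_sq_norm_mul_norm_logHarmonicPreSchwarzian hz]
  calc ‖3 * (conj (1 - z) / (1 - z)) + 2 * conj z‖
      ≤ ‖3 * (conj (1 - z) / (1 - z))‖ + ‖2 * conj z‖ := norm_add_le _ _
    _ = 3 + 2 * ‖z‖ := by
      rw [norm_mul, norm_mul, norm_conj_div_self hz₁, norm_conj]; norm_num

theorem one_sub_sq_norm_mul_norm_logHarmonicPreSchwarzian_ofReal {r : ℝ} (hr₀ : 0 ≤ r)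
    (hr₁ : r < 1) :
    (1 - ‖(r : ℂ)‖ ^ 2) * ‖logHarmonicPreSchwarzian r‖ = 3 + 2 * r := by
  have hnorm : ‖(r : ℂ)‖ = r := by rw [norm_real, Real.norm_of_nonneg hr₀]
  have hr : (1 : ℂ) - r ≠ 0 := sub_ne_zero.mpr (by exact_mod_cast hr₁.ne')
  rw [one_sub_sq_norm_mul_norm_logHarmonicPreSchwarzian (by rwa [hnorm]), map_sub, map_one,
    conj_ofReal, div_self hr, mul_one]
  exact_mod_cast (Real.norm_of_nonneg (by linarith) : ‖3 + 2 * r‖ = 3 + 2 * r)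

theorem preSchwarzian_norm_logharmonic_example_eq_five :
    sSup {y : ℝ | ∃ z ∈ ball (0:ℂ) 1,
      y = (1 - ‖z‖^2) *
        ‖(3 : ℂ) / (1 - z) - conj z / ((1 : ℂ) - (‖z‖ : ℂ)^2)‖} = 5 := by
  change sSup {y : ℝ | ∃ z ∈ ball (0:ℂ) 1,
    y = (1 - ‖z‖ ^ 2) * ‖logHarmonicPreSchwarzian z‖} = 5
  refine csSup_eq_of_forall_le_of_forall_lt_exists_gt ⟨_, 0, mem_ball_self one_pos, rfl⟩ ?_ ?_
  · rintro _ ⟨z, hz, rfl⟩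
    rw [mem_ball_zero_iff] at hz
    linarith [one_sub_sq_norm_mul_norm_logHarmonicPreSchwarzian_le hz]
  · intro w hw
    obtain ⟨r, hr, hr₁⟩ := exists_between (max_lt one_pos (by linarith : (w - 3) / 2 < 1))
    have hr₀ : 0 ≤ r := (le_max_left _ _).trans hr.le
    refine ⟨3 + 2 * r, ⟨r, ?_, ?_⟩, ?_⟩
    · rwa [mem_ball_zero_iff, norm_real, Real.norm_of_nonneg hr₀]
    · exact (one_sub_sq_norm_mul_norm_logHarmonicPreSchwarzian_ofReal hr₀ hr₁).symm
    · linarith [(le_max_right _ _).trans_lt hr]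
end

section
/- Let h, g be non-vanishing holomorphic functions on 𝔻, h'g never zero, ω = g'h/(h'g) a holomorphic self-map of 𝔻, ε ∈ closure(𝔻), and suppose β := sup_{z∈𝔻}(1-|z|²)|g'(z)/g(z)| < ∞. Then for all z ∈ 𝔻, (1-|z|²)·| |P_{hg^ε}(z)| - |P_f(z)| | ≤ 1 + |1 - ε|·β. Consequently sup_{z∈𝔻}(1-|z|²)|P_f(z)| < ∞ if and only if sup_{z∈𝔻}(1-|z|²)|P_{hg^ε}(z)| < ∞, and when finite, | ‖P_f‖ - ‖P_{hg^ε}‖ | ≤ 1 + |1-ε|·β. -/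
/-!
The two pre-Schwarzians differ by `(ε - 1) g'/g + (ε + conj ω)/(1 + ε ω) · ω'/(1 - |ω|²)`.
The middle factor has modulus at most `1`, since
`|1 + ε ω|² - |ε + conj ω|² = (1 - |ε|²)(1 - |ω|²)`; the Schwarz–Pick lemma (Schwarz's lemma
conjugated by disk automorphisms) gives `(1 - |z|²)|ω'| ≤ 1 - |ω|²`; and `(1 - |z|²)|g'/g| ≤ β`.
The reverse triangle inequality turns this pointwise bound into the comparison of the weighted
suprema.
-/

open Complex Metric ComplexConjugate Set

lemma sq_norm_one_add_conj_mul_sub_sq_norm_add (a w : ℂ) :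
    ‖1 + conj a * w‖ ^ 2 - ‖w + a‖ ^ 2 = (1 - ‖a‖ ^ 2) * (1 - ‖w‖ ^ 2) := by
  simp only [Complex.sq_norm, normSq_apply, add_re, add_im, mul_re, mul_im,
    one_re, one_im, conj_re, conj_im]
  ring

lemma norm_add_le_norm_one_add_conj_mul {a w : ℂ} (ha : ‖a‖ ≤ 1) (hw : ‖w‖ ≤ 1) :
    ‖w + a‖ ≤ ‖1 + conj a * w‖ := by
  have := sq_norm_one_add_conj_mul_sub_sq_norm_add a w
  have : 0 ≤ (1 - ‖a‖ ^ 2) * (1 - ‖w‖ ^ 2) := by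
    apply mul_nonneg <;> nlinarith [norm_nonneg a, norm_nonneg w]
  exact pow_le_pow_iff_left₀ (norm_nonneg _) (norm_nonneg _) two_ne_zero |>.mp (by linarith)

lemma norm_add_lt_norm_one_add_conj_mul {a w : ℂ} (ha : ‖a‖ < 1) (hw : ‖w‖ < 1) :
    ‖w + a‖ < ‖1 + conj a * w‖ := by
  have := sq_norm_one_add_conj_mul_sub_sq_norm_add a w
  have : 0 < (1 - ‖a‖ ^ 2) * (1 - ‖w‖ ^ 2) := by
    apply mul_pos <;> nlinarith [norm_nonneg a, norm_nonneg w]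
  exact pow_lt_pow_iff_left₀ (norm_nonneg _) (norm_nonneg _) two_ne_zero |>.mp (by linarith)

lemma one_add_conj_mul_ne_zero {a w : ℂ} (ha : ‖a‖ ≤ 1) (hw : ‖w‖ < 1) :
    1 + conj a * w ≠ 0 := by
  intro h
  have : ‖conj a * w‖ = 1 := by rw [eq_neg_of_add_eq_zero_right h, norm_neg, norm_one]
  rw [norm_mul, RCLike.norm_conj] at this
  nlinarith [norm_nonneg a, norm_nonneg w]

lemma one_sub_conj_mul_self (a : ℂ) : 1 - conj a * a = ((1 - ‖a‖ ^ 2 : ℝ) : ℂ) := by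
  rw [conj_mul']; push_cast; rfl

noncomputable def diskMobius (a w : ℂ) : ℂ := (w + a) / (1 + conj a * w)

lemma diskMobius_zero (a : ℂ) : diskMobius a 0 = a := by simp [diskMobius]

lemma diskMobius_neg_self (a : ℂ) : diskMobius (-a) a = 0 := by simp [diskMobius]

lemma mapsTo_diskMobius {a : ℂ} (ha : ‖a‖ < 1) :
    MapsTo (diskMobius a) (ball 0 1) (ball 0 1) := fun w hw => by
  rw [mem_ball_zero_iff] at hw ⊢
  rw [diskMobius, norm_div, div_lt_one ((norm_nonneg _).trans_lt
    (norm_add_lt_norm_one_add_conj_mul ha hw))]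
  exact norm_add_lt_norm_one_add_conj_mul ha hw

lemma hasDerivAt_diskMobius {a w : ℂ} (hw : 1 + conj a * w ≠ 0) :
    HasDerivAt (diskMobius a) ((1 - conj a * a) / (1 + conj a * w) ^ 2) w :=
  (((hasDerivAt_id w).add_const a).div
    (((hasDerivAt_id w).const_mul (conj a)).const_add 1) hw).congr_deriv (by simp only [id]; ring)

lemma hasDerivAt_diskMobius_zero (a : ℂ) : HasDerivAt (diskMobius a) (1 - conj a * a) 0 :=
  (hasDerivAt_diskMobius (by simp)).congr_deriv (by simp)

lemma hasDerivAt_diskMobius_neg_self {a : ℂ} (ha : ‖a‖ < 1) :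
    HasDerivAt (diskMobius (-a)) (1 - conj a * a)⁻¹ a := by
  have hne : 1 - conj a * a ≠ 0 := by
    simpa [map_neg, neg_mul, ← sub_eq_add_neg] using
      one_add_conj_mul_ne_zero (a := -a) (by rw [norm_neg]; exact ha.le) ha
  refine (hasDerivAt_diskMobius (a := -a) (w := a) ?_).congr_deriv ?_
  · simpa [← sub_eq_add_neg] using hne
  · simp only [map_neg, neg_mul, ← sub_eq_add_neg]
    field_simp

lemma differentiableOn_diskMobius {a : ℂ} (ha : ‖a‖ < 1) :
    DifferentiableOn ℂ (diskMobius a) (ball 0 1) := fun _ hw =>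
  (hasDerivAt_diskMobius (one_add_conj_mul_ne_zero ha.le (mem_ball_zero_iff.mp hw)))
    |>.differentiableAt.differentiableWithinAt

theorem one_sub_sq_norm_mul_norm_deriv_le_of_mapsTo_ball {f : ℂ → ℂ}
    (hf : DifferentiableOn ℂ f (ball 0 1))
    (hmaps : MapsTo f (ball 0 1) (ball 0 1)) {z : ℂ} (hz : z ∈ ball (0 : ℂ) 1) :
    (1 - ‖z‖ ^ 2) * ‖deriv f z‖ ≤ 1 - ‖f z‖ ^ 2 := by
  have hz1 : ‖z‖ < 1 := mem_ball_zero_iff.mp hz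
  have ha : ‖f z‖ < 1 := mem_ball_zero_iff.mp (hmaps hz)
  have hna : ‖-f z‖ < 1 := by rwa [norm_neg]
  set F := diskMobius (-f z) ∘ f ∘ diskMobius z
  have hFd : DifferentiableOn ℂ F (ball 0 1) :=
    (differentiableOn_diskMobius hna).comp (hf.comp (differentiableOn_diskMobius hz1)
      (mapsTo_diskMobius hz1)) (hmaps.comp (mapsTo_diskMobius hz1))
  have hFmaps : MapsTo F (ball 0 1) (closedBall (F 0) 1) := by
    rw [show F 0 = 0 by simp [F, diskMobius_zero, diskMobius_neg_self]]
    exact ((mapsTo_diskMobius hna).comp (hmaps.comp (mapsTo_diskMobius hz1))).mono_right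
      ball_subset_closedBall
  have hfz : HasDerivAt f (deriv f z) z :=
    (hf.differentiableAt (isOpen_ball.mem_nhds hz)).hasDerivAt
  have hF' : HasDerivAt F ((1 - conj (f z) * f z)⁻¹ * (deriv f z * (1 - conj z * z))) 0 :=
    (hasDerivAt_diskMobius_neg_self ha).comp_of_eq 0
      (hfz.comp_of_eq 0 (hasDerivAt_diskMobius_zero z) (diskMobius_zero z).symm)
      (by simp [diskMobius_zero])
  have hpos : 0 < 1 - ‖f z‖ ^ 2 := by nlinarith [norm_nonneg (f z)]
  have hD := norm_deriv_le_one_of_mapsTo_ball hFd hFmaps one_pos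
  rw [hF'.deriv, one_sub_conj_mul_self, one_sub_conj_mul_self, norm_mul, norm_mul, norm_inv,
    Complex.norm_real, Complex.norm_real, Real.norm_of_nonneg hpos.le,
    Real.norm_of_nonneg (by nlinarith [norm_nonneg z]), inv_mul_le_iff₀ hpos] at hD
  linarith

lemma preSchwarzian_sub_eq {A q u w ε : ℂ} (hε : 1 + ε * w ≠ 0)
    (hw : 1 - (‖w‖ : ℂ) ^ 2 ≠ 0) :
    (A + ε * q + ε * u / (1 + ε * w)) - (A + q - conj w * u / (1 - (‖w‖ : ℂ) ^ 2)) =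
      (ε - 1) * q + (ε + conj w) / (1 + ε * w) * (u / (1 - (‖w‖ : ℂ) ^ 2)) := by
  rw [← mul_conj'] at hw ⊢
  field_simp
  ring

lemma mul_norm_preSchwarzian_sub_le {A q u w ε : ℂ} {r β : ℝ} (hε : ‖ε‖ ≤ 1) (hw : ‖w‖ < 1)
    (hr : 0 ≤ r) (hq : r * ‖q‖ ≤ β) (hu : r * ‖u‖ ≤ 1 - ‖w‖ ^ 2) :
    r * ‖(A + ε * q + ε * u / (1 + ε * w)) - (A + q - conj w * u / (1 - (‖w‖ : ℂ) ^ 2))‖ ≤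
      1 + ‖1 - ε‖ * β := by
  have hw2 : 0 < 1 - ‖w‖ ^ 2 := by nlinarith [norm_nonneg w]
  have hcast : 1 - (‖w‖ : ℂ) ^ 2 = ((1 - ‖w‖ ^ 2 : ℝ) : ℂ) := by push_cast; rfl
  have hεw : ‖ε + conj w‖ ≤ ‖1 + ε * w‖ := by
    simpa [mul_comm] using norm_add_le_norm_one_add_conj_mul (a := conj w) (w := ε)
      (by simpa using hw.le) hε
  have hne : 1 + ε * w ≠ 0 := by
    simpa using one_add_conj_mul_ne_zero (a := conj ε) (by simpa using hε) hw
  rw [preSchwarzian_sub_eq hne (by rw [hcast]; exact_mod_cast hw2.ne'), hcast]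
  calc r * ‖(ε - 1) * q + (ε + conj w) / (1 + ε * w) * (u / ((1 - ‖w‖ ^ 2 : ℝ) : ℂ))‖
      ≤ r * (‖1 - ε‖ * ‖q‖ + 1 * (‖u‖ / (1 - ‖w‖ ^ 2))) := by
        gcongr
        refine (norm_add_le _ _).trans (add_le_add ?_ ?_)
        · rw [norm_mul, norm_sub_rev]
        · rw [norm_mul, norm_div, norm_div, Complex.norm_real, Real.norm_of_nonneg hw2.le]
          gcongr
          exact div_le_one_of_le₀ hεw (norm_nonneg _)
    _ = ‖1 - ε‖ * (r * ‖q‖) + r * ‖u‖ / (1 - ‖w‖ ^ 2) := by ring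
    _ ≤ ‖1 - ε‖ * β + 1 := by
        gcongr
        exact div_le_one_of_le₀ hu hw2.le
    _ = 1 + ‖1 - ε‖ * β := add_comm _ _

section SupComparison

variable {α : Type*} {s : Set α} {P Q : α → ℝ} {C : ℝ}

lemma bddAbove_of_abs_sub_le (hPQ : ∀ z ∈ s, |P z - Q z| ≤ C)
    (hQ : BddAbove {y | ∃ z ∈ s, y = Q z}) : BddAbove {y | ∃ z ∈ s, y = P z} := by
  obtain ⟨M, hM⟩ := hQ
  refine ⟨M + C, ?_⟩
  rintro _ ⟨z, hz, rfl⟩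
  linarith [hM ⟨z, hz, rfl⟩, (abs_le.mp (hPQ z hz)).2]

lemma csSup_le_csSup_add_of_abs_sub_le (hs : s.Nonempty) (hPQ : ∀ z ∈ s, |P z - Q z| ≤ C)
    (hQ : BddAbove {y | ∃ z ∈ s, y = Q z}) :
    sSup {y | ∃ z ∈ s, y = P z} ≤ sSup {y | ∃ z ∈ s, y = Q z} + C := by
  obtain ⟨z₀, hz₀⟩ := hs
  refine csSup_le ⟨P z₀, z₀, hz₀, rfl⟩ ?_
  rintro _ ⟨z, hz, rfl⟩
  linarith [le_csSup hQ ⟨z, hz, rfl⟩, (abs_le.mp (hPQ z hz)).2]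

lemma bddAbove_iff_of_abs_sub_le (hPQ : ∀ z ∈ s, |P z - Q z| ≤ C) :
    BddAbove {y | ∃ z ∈ s, y = P z} ↔ BddAbove {y | ∃ z ∈ s, y = Q z} :=
  ⟨bddAbove_of_abs_sub_le fun z hz => abs_sub_comm (Q z) (P z) ▸ hPQ z hz,
    bddAbove_of_abs_sub_le hPQ⟩

lemma abs_csSup_sub_csSup_le (hs : s.Nonempty) (hPQ : ∀ z ∈ s, |P z - Q z| ≤ C)
    (hP : BddAbove {y | ∃ z ∈ s, y = P z}) :
    |sSup {y | ∃ z ∈ s, y = P z} - sSup {y | ∃ z ∈ s, y = Q z}| ≤ C := by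
  have hQP : ∀ z ∈ s, |Q z - P z| ≤ C := fun z hz => abs_sub_comm (Q z) (P z) ▸ hPQ z hz
  rw [abs_sub_le_iff]
  constructor
  · linarith [csSup_le_csSup_add_of_abs_sub_le hs hPQ ((bddAbove_iff_of_abs_sub_le hPQ).mp hP)]
  · linarith [csSup_le_csSup_add_of_abs_sub_le hs hQP hP]

end SupComparison

theorem preSchwarzian_norm_comparison_eps_general
    (h g : ℂ → ℂ)
    (hh : DifferentiableOn ℂ h (ball (0:ℂ) 1))
    (hg : DifferentiableOn ℂ g (ball (0:ℂ) 1))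
    (hh'g0 : ∀ z ∈ ball (0:ℂ) 1, deriv h z * g z ≠ 0)
    (ω : ℂ → ℂ)
    (hω : ∀ z ∈ ball (0:ℂ) 1, ω z = deriv g z * h z / (deriv h z * g z))
    (hωmap : ∀ z ∈ ball (0:ℂ) 1, ‖ω z‖ < 1)
    (ε : ℂ) (hε : ‖ε‖ ≤ 1)
    (β : ℝ)
    (hβbdd : BddAbove {y : ℝ | ∃ z ∈ ball (0:ℂ) 1,
      y = (1 - ‖z‖^2) * ‖deriv g z / g z‖})
    (hβ : β = sSup {y : ℝ | ∃ z ∈ ball (0:ℂ) 1,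
      y = (1 - ‖z‖^2) * ‖deriv g z / g z‖})
    (Pf Phgε : ℂ → ℂ)
    (hPf : ∀ z ∈ ball (0:ℂ) 1,
      Pf z = deriv (deriv h) z / deriv h z + deriv g z / g z -
        conj (ω z) * deriv ω z / (1 - (‖ω z‖ : ℂ)^2))
    (hPhgε : ∀ z ∈ ball (0:ℂ) 1,
      Phgε z = deriv (deriv h) z / deriv h z + ε * (deriv g z / g z) +
        ε * deriv ω z / (1 + ε * ω z)) :
    (∀ z ∈ ball (0:ℂ) 1,
      (1 - ‖z‖^2) * |‖Phgε z‖ - ‖Pf z‖| ≤ 1 + ‖(1 : ℂ) - ε‖ * β) ∧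
    (BddAbove {y : ℝ | ∃ z ∈ ball (0:ℂ) 1, y = (1 - ‖z‖^2) * ‖Pf z‖} ↔
      BddAbove {y : ℝ | ∃ z ∈ ball (0:ℂ) 1, y = (1 - ‖z‖^2) * ‖Phgε z‖}) ∧
    (BddAbove {y : ℝ | ∃ z ∈ ball (0:ℂ) 1, y = (1 - ‖z‖^2) * ‖Pf z‖} →
      |sSup {y : ℝ | ∃ z ∈ ball (0:ℂ) 1, y = (1 - ‖z‖^2) * ‖Pf z‖} -
        sSup {y : ℝ | ∃ z ∈ ball (0:ℂ) 1, y = (1 - ‖z‖^2) * ‖Phgε z‖}|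
        ≤ 1 + ‖(1 : ℂ) - ε‖ * β) := by
  have hωd : DifferentiableOn ℂ ω (ball 0 1) :=
    (((hg.deriv isOpen_ball).mul hh).div ((hh.deriv isOpen_ball).mul hg) hh'g0).congr hω
  have hweight : ∀ z ∈ ball (0 : ℂ) 1, 0 ≤ 1 - ‖z‖ ^ 2 := fun z hz => by
    nlinarith [norm_nonneg z, mem_ball_zero_iff.mp hz]
  have hpt : ∀ z ∈ ball (0:ℂ) 1,
      (1 - ‖z‖^2) * |‖Phgε z‖ - ‖Pf z‖| ≤ 1 + ‖(1 : ℂ) - ε‖ * β := fun z hz => by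
    refine (mul_le_mul_of_nonneg_left (abs_norm_sub_norm_le _ _) (hweight z hz)).trans ?_
    rw [hPhgε z hz, hPf z hz]
    exact mul_norm_preSchwarzian_sub_le hε (hωmap z hz) (hweight z hz)
      (hβ ▸ le_csSup hβbdd ⟨z, hz, rfl⟩)
      (one_sub_sq_norm_mul_norm_deriv_le_of_mapsTo_ball hωd
        (fun w hw => mem_ball_zero_iff.mpr (hωmap w hw)) hz)
  have habs : ∀ z ∈ ball (0:ℂ) 1,
      |(1 - ‖z‖^2) * ‖Pf z‖ - (1 - ‖z‖^2) * ‖Phgε z‖| ≤ 1 + ‖(1 : ℂ) - ε‖ * β := fun z hz => by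
    rw [← mul_sub, abs_mul, abs_of_nonneg (hweight z hz), abs_sub_comm]
    exact hpt z hz
  exact ⟨hpt, bddAbove_iff_of_abs_sub_le habs,
    abs_csSup_sub_csSup_le ⟨0, mem_ball_self one_pos⟩ habs⟩

theorem preSchwarzian_norm_comparison_eps
    (h g : ℂ → ℂ)
    (hh : DifferentiableOn ℂ h (ball (0:ℂ) 1))
    (hg : DifferentiableOn ℂ g (ball (0:ℂ) 1))
    (hh0 : ∀ z ∈ ball (0:ℂ) 1, h z ≠ 0)
    (hg0 : ∀ z ∈ ball (0:ℂ) 1, g z ≠ 0)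
    (hh'g0 : ∀ z ∈ ball (0:ℂ) 1, deriv h z * g z ≠ 0)
    (ω : ℂ → ℂ)
    (hω : ∀ z ∈ ball (0:ℂ) 1, ω z = deriv g z * h z / (deriv h z * g z))
    (hωmap : ∀ z ∈ ball (0:ℂ) 1, ‖ω z‖ < 1)
    (ε : ℂ) (hε : ‖ε‖ ≤ 1)
    (β : ℝ)
    (hβbdd : BddAbove {y : ℝ | ∃ z ∈ ball (0:ℂ) 1,
      y = (1 - ‖z‖^2) * ‖deriv g z / g z‖})
    (hβ : β = sSup {y : ℝ | ∃ z ∈ ball (0:ℂ) 1,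
      y = (1 - ‖z‖^2) * ‖deriv g z / g z‖})
    (Pf Phgε : ℂ → ℂ)
    (hPf : ∀ z ∈ ball (0:ℂ) 1,
      Pf z = deriv (deriv h) z / deriv h z + deriv g z / g z -
        conj (ω z) * deriv ω z / (1 - (‖ω z‖ : ℂ)^2))
    (hPhgε : ∀ z ∈ ball (0:ℂ) 1,
      Phgε z = deriv (deriv h) z / deriv h z + ε * (deriv g z / g z) +
        ε * deriv ω z / (1 + ε * ω z)) :
    (∀ z ∈ ball (0:ℂ) 1,
      (1 - ‖z‖^2) * |‖Phgε z‖ - ‖Pf z‖| ≤ 1 + ‖(1 : ℂ) - ε‖ * β) ∧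
    (BddAbove {y : ℝ | ∃ z ∈ ball (0:ℂ) 1, y = (1 - ‖z‖^2) * ‖Pf z‖} ↔
      BddAbove {y : ℝ | ∃ z ∈ ball (0:ℂ) 1, y = (1 - ‖z‖^2) * ‖Phgε z‖}) ∧
    (BddAbove {y : ℝ | ∃ z ∈ ball (0:ℂ) 1, y = (1 - ‖z‖^2) * ‖Pf z‖} →
      |sSup {y : ℝ | ∃ z ∈ ball (0:ℂ) 1, y = (1 - ‖z‖^2) * ‖Pf z‖} -
        sSup {y : ℝ | ∃ z ∈ ball (0:ℂ) 1, y = (1 - ‖z‖^2) * ‖Phgε z‖}|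
        ≤ 1 + ‖(1 : ℂ) - ε‖ * β) :=
  preSchwarzian_norm_comparison_eps_general h g hh hg hh'g0 ω hω hωmap ε hε β hβbdd hβ Pf Phgε hPf
    hPhgε
end

section
/- Let h, g be non-vanishing holomorphic functions on 𝔻 with h'g never zero and ω = g'h/(h'g) a holomorphic self-map of 𝔻. Then for all z ∈ 𝔻, (1-|z|²)·| |P_{hg}(z)| - |P_f(z)| | ≤ 1, where P_{hg} = (hg)''/(hg)' and P_f = h''/h' + g'/g - conj(ω)ω'/(1-|ω|²). Hence ‖P_f‖ < ∞ iff ‖P_{hg}‖ < ∞, and in the finite case |‖P_f‖ - ‖P_{hg}‖| ≤ 1. -/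
/-!
Since `(hg)' = h'g (1 + ω)`, logarithmic differentiation gives
`P_{hg} = h''/h' + g'/g + ω'/(1 + ω)`, hence
`P_{hg} - P_f = ((1 + conj ω)/(1 + ω)) · ω'/(1 - |ω|²)`. The first factor is unimodular and the
Schwarz–Pick lemma bounds `(1 - |z|²)|ω'|/(1 - |ω|²)` by `1`. The reverse triangle inequality then
gives the pointwise estimate, and a pointwise bound by `1` transfers to the suprema.
-/

open Complex Metric ComplexConjugate Set

noncomputable def moebius (a z : ℂ) : ℂ := (a - z) / (1 - conj a * z)

section Moebius

variable {a z : ℂ}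

lemma one_sub_conj_mul_ne_zero (ha : ‖a‖ < 1) (hz : ‖z‖ < 1) : 1 - conj a * z ≠ 0 := by
  refine sub_ne_zero.2 fun h => ?_
  have : ‖conj a * z‖ < 1 := by
    rw [norm_mul, RCLike.norm_conj]
    nlinarith [norm_nonneg a, norm_nonneg z]
  simp [← h] at this

lemma norm_one_sub_conj_mul_sq_sub_norm_sub_sq (a z : ℂ) :
    ‖1 - conj a * z‖ ^ 2 - ‖a - z‖ ^ 2 = (1 - ‖a‖ ^ 2) * (1 - ‖z‖ ^ 2) := by
  simp only [Complex.sq_norm, normSq_apply, mul_re, mul_im, sub_re, sub_im, one_re, one_im,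
    conj_re, conj_im]
  ring

lemma norm_moebius_lt_one (ha : ‖a‖ < 1) (hz : ‖z‖ < 1) : ‖moebius a z‖ < 1 := by
  have hden := norm_pos_iff.2 (one_sub_conj_mul_ne_zero ha hz)
  rw [moebius, norm_div, div_lt_one hden]
  refine lt_of_pow_lt_pow_left₀ 2 hden.le ?_
  have hpos : 0 < (1 - ‖a‖ ^ 2) * (1 - ‖z‖ ^ 2) :=
    mul_pos (by nlinarith [norm_nonneg a]) (by nlinarith [norm_nonneg z])
  linarith [norm_one_sub_conj_mul_sq_sub_norm_sub_sq a z]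

lemma mapsTo_moebius (ha : ‖a‖ < 1) : MapsTo (moebius a) (ball 0 1) (ball 0 1) :=
  fun _ hz => mem_ball_zero_iff.2 <| norm_moebius_lt_one ha (mem_ball_zero_iff.1 hz)

lemma hasDerivAt_moebius (hz : 1 - conj a * z ≠ 0) :
    HasDerivAt (moebius a) ((‖a‖ ^ 2 - 1) / (1 - conj a * z) ^ 2) z := by
  have hnum : HasDerivAt (fun x => a - x) (-1) z := (hasDerivAt_id z).const_sub a
  have hden : HasDerivAt (fun x => 1 - conj a * x) (-conj a) z := by
    simpa using ((hasDerivAt_id z).const_mul (conj a)).const_sub 1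
  refine (hnum.div hden hz).congr_deriv ?_
  congr 1
  linear_combination mul_conj' a

lemma differentiableOn_moebius (ha : ‖a‖ < 1) : DifferentiableOn ℂ (moebius a) (ball 0 1) :=
  fun _ hz => (hasDerivAt_moebius <| one_sub_conj_mul_ne_zero ha
    (mem_ball_zero_iff.1 hz)).differentiableAt.differentiableWithinAt

@[simp] lemma moebius_zero (a : ℂ) : moebius a 0 = a := by simp [moebius]

@[simp] lemma moebius_self (a : ℂ) : moebius a a = 0 := by simp [moebius]

lemma hasDerivAt_moebius_zero (a : ℂ) : HasDerivAt (moebius a) (‖a‖ ^ 2 - 1) 0 := by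
  simpa using hasDerivAt_moebius (a := a) (z := 0) (by simp)

lemma hasDerivAt_moebius_self (ha : ‖a‖ < 1) :
    HasDerivAt (moebius a) (1 / (‖a‖ ^ 2 - 1)) a := by
  have hne : 1 - (‖a‖ : ℂ) ^ 2 ≠ 0 := by
    norm_cast; nlinarith [norm_nonneg a]
  convert hasDerivAt_moebius (one_sub_conj_mul_ne_zero ha ha) using 1
  rw [conj_mul', div_eq_div_iff (by rwa [← neg_sub, neg_ne_zero]) (pow_ne_zero 2 hne)]
  ring

end Moebius

/-- Schwarz–Pick: apply the Schwarz lemma to `moebius (f z) ∘ f ∘ moebius z`, which fixes `0`. -/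
theorem one_sub_norm_sq_mul_norm_deriv_le {f : ℂ → ℂ} (hd : DifferentiableOn ℂ f (ball 0 1))
    (hf : MapsTo f (ball 0 1) (ball 0 1)) {z : ℂ} (hz : z ∈ ball 0 1) :
    (1 - ‖z‖ ^ 2) * ‖deriv f z‖ ≤ 1 - ‖f z‖ ^ 2 := by
  have hz1 : ‖z‖ < 1 := mem_ball_zero_iff.1 hz
  have hfz1 : ‖f z‖ < 1 := mem_ball_zero_iff.1 (hf hz)
  set G := moebius (f z) ∘ f ∘ moebius z
  have hGd : DifferentiableOn ℂ G (ball 0 1) :=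
    (differentiableOn_moebius hfz1).comp (hd.comp (differentiableOn_moebius hz1)
      (mapsTo_moebius hz1)) (hf.comp (mapsTo_moebius hz1))
  have hGmaps : MapsTo G (ball 0 1) (closedBall (G 0) 1) := by
    simpa [G] using ((mapsTo_moebius hfz1).comp (hf.comp (mapsTo_moebius hz1))).mono_right
      ball_subset_closedBall
  have hG' : HasDerivAt G (1 / (‖f z‖ ^ 2 - 1) * (deriv f z * (‖z‖ ^ 2 - 1))) 0 := by
    have hfd : HasDerivAt f (deriv f z) (moebius z 0) := by
      rw [moebius_zero]; exact (hd.differentiableAt (isOpen_ball.mem_nhds hz)).hasDerivAt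
    have hφ : HasDerivAt (moebius (f z)) (1 / (‖f z‖ ^ 2 - 1)) (f (moebius z 0)) := by
      rw [moebius_zero]; exact hasDerivAt_moebius_self hfz1
    exact hφ.comp 0 (hfd.comp 0 (hasDerivAt_moebius_zero z))
  have hbound := norm_deriv_le_div_of_mapsTo_ball hGd hGmaps one_pos
  rw [hG'.deriv, div_one] at hbound
  have hpos : 0 < 1 - ‖f z‖ ^ 2 := by nlinarith [norm_nonneg (f z)]
  have hnorm (x : ℂ) (hx : ‖x‖ < 1) : ‖(‖x‖ : ℂ) ^ 2 - 1‖ = 1 - ‖x‖ ^ 2 := by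
    rw [← ofReal_pow, ← ofReal_one, ← ofReal_sub, norm_real, Real.norm_eq_abs,
      abs_of_nonpos (by nlinarith [norm_nonneg x])]
    ring
  rw [norm_mul, norm_mul, norm_div, norm_one, hnorm _ hfz1, hnorm _ hz1] at hbound
  rw [one_div_mul_eq_div, div_le_one hpos] at hbound
  linarith

noncomputable def preSchwarzian (f : ℂ → ℂ) (z : ℂ) : ℂ := deriv (deriv f) z / deriv f z

section ProductFormula

variable {U : Set ℂ} {h g ω : ℂ → ℂ}

lemma differentiableOn_deriv_mul_div_deriv_mul (hU : IsOpen U) (hh : DifferentiableOn ℂ h U)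
    (hg : DifferentiableOn ℂ g U) (hne : ∀ z ∈ U, deriv h z * g z ≠ 0) :
    DifferentiableOn ℂ (fun z => deriv g z * h z / (deriv h z * g z)) U :=
  ((hg.deriv hU).mul hh).div ((hh.deriv hU).mul hg) hne

lemma deriv_mul_eqOn (hU : IsOpen U) (hh : DifferentiableOn ℂ h U) (hg : DifferentiableOn ℂ g U)
    (hne : ∀ z ∈ U, deriv h z * g z ≠ 0)
    (hω : EqOn ω (fun z => deriv g z * h z / (deriv h z * g z)) U) :
    EqOn (deriv fun w => h w * g w) (fun w => deriv h w * g w * (1 + ω w)) U := by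
  intro z hz
  dsimp only
  rw [deriv_fun_mul (hh.differentiableAt (hU.mem_nhds hz)) (hg.differentiableAt (hU.mem_nhds hz)),
    hω hz, mul_one_add, mul_div_cancel₀ _ (hne z hz)]
  ring

lemma preSchwarzian_mul_eq (hU : IsOpen U) (hh : DifferentiableOn ℂ h U)
    (hg : DifferentiableOn ℂ g U) (hne : ∀ z ∈ U, deriv h z * g z ≠ 0)
    (hω : EqOn ω (fun z => deriv g z * h z / (deriv h z * g z)) U) {z : ℂ} (hz : z ∈ U)
    (hω1 : 1 + ω z ≠ 0) :
    preSchwarzian (fun w => h w * g w) z =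
      preSchwarzian h z + deriv g z / g z + deriv ω z / (1 + ω z) := by
  have hdiff {f : ℂ → ℂ} (hf : DifferentiableOn ℂ f U) : HasDerivAt f (deriv f z) z :=
    (hf.differentiableAt (hU.mem_nhds hz)).hasDerivAt
  have hωd : DifferentiableOn ℂ ω U :=
    (differentiableOn_deriv_mul_div_deriv_mul hU hh hg hne).congr hω
  have hF'' : deriv (deriv fun w => h w * g w) z =
      (deriv (deriv h) z * g z + deriv h z * deriv g z) * (1 + ω z) +
        deriv h z * g z * deriv ω z := by
    rw [(Filter.eventuallyEq_of_mem (hU.mem_nhds hz) (deriv_mul_eqOn hU hh hg hne hω)).deriv_eq]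
    exact (((hdiff (hh.deriv hU)).mul (hdiff hg)).mul ((hdiff hωd).const_add 1)).deriv
  have hne' := hne z hz
  rw [preSchwarzian, preSchwarzian, hF'', deriv_mul_eqOn hU hh hg hne hω hz]
  field_simp [left_ne_zero_of_mul hne', right_ne_zero_of_mul hne']

end ProductFormula

lemma one_add_ne_zero_of_norm_lt_one {w : ℂ} (hw : ‖w‖ < 1) : 1 + w ≠ 0 := by
  intro h
  simp [eq_neg_of_add_eq_zero_right h] at hw

lemma norm_div_one_add_add_conj_mul_div (v : ℂ) {w : ℂ} (hw : ‖w‖ < 1) :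
    ‖v / (1 + w) + conj w * v / (1 - (‖w‖ : ℂ) ^ 2)‖ = ‖v‖ / (1 - ‖w‖ ^ 2) := by
  have hw1 := one_add_ne_zero_of_norm_lt_one hw
  have hpos : 0 < 1 - ‖w‖ ^ 2 := by nlinarith [norm_nonneg w]
  have hcast : 1 - (‖w‖ : ℂ) ^ 2 = ((1 - ‖w‖ ^ 2 : ℝ) : ℂ) := by push_cast; ring
  have hsum : v / (1 + w) + conj w * v / (1 - (‖w‖ : ℂ) ^ 2) =
      (1 + conj w) / (1 + w) * (v / (1 - (‖w‖ : ℂ) ^ 2)) := by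
    rw [hcast]
    have : ((1 - ‖w‖ ^ 2 : ℝ) : ℂ) ≠ 0 := ofReal_ne_zero.2 hpos.ne'
    field_simp
    push_cast
    linear_combination v * conj_mul' w
  have hratio : ‖(1 + conj w) / (1 + w)‖ = 1 := by
    rw [show 1 + conj w = conj (1 + w) by simp, norm_div, RCLike.norm_conj,
      div_self (norm_ne_zero_iff.2 hw1)]
  rw [hsum, norm_mul, hratio, one_mul, norm_div, hcast, norm_real, Real.norm_of_nonneg hpos.le]

lemma one_sub_norm_sq_nonneg {z : ℂ} (hz : z ∈ ball (0:ℂ) 1) : 0 ≤ 1 - ‖z‖ ^ 2 :=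
  sub_nonneg.2 (pow_le_one₀ (norm_nonneg z) (mem_ball_zero_iff.1 hz).le)

theorem one_sub_norm_sq_mul_norm_preSchwarzian_mul_sub_le {h g ω : ℂ → ℂ}
    (hh : DifferentiableOn ℂ h (ball 0 1)) (hg : DifferentiableOn ℂ g (ball 0 1))
    (hne : ∀ z ∈ ball (0:ℂ) 1, deriv h z * g z ≠ 0)
    (hω : EqOn ω (fun z => deriv g z * h z / (deriv h z * g z)) (ball 0 1))
    (hωmaps : MapsTo ω (ball 0 1) (ball 0 1)) {z : ℂ} (hz : z ∈ ball 0 1) :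
    (1 - ‖z‖ ^ 2) * ‖preSchwarzian (fun w => h w * g w) z - (preSchwarzian h z +
      deriv g z / g z - conj (ω z) * deriv ω z / (1 - (‖ω z‖ : ℂ) ^ 2))‖ ≤ 1 := by
  have hω1 : ‖ω z‖ < 1 := mem_ball_zero_iff.1 (hωmaps hz)
  have hωd : DifferentiableOn ℂ ω (ball 0 1) :=
    (differentiableOn_deriv_mul_div_deriv_mul isOpen_ball hh hg hne).congr hω
  rw [preSchwarzian_mul_eq isOpen_ball hh hg hne hω hz (one_add_ne_zero_of_norm_lt_one hω1),
    add_sub_sub_cancel, norm_div_one_add_add_conj_mul_div _ hω1, ← mul_div_assoc]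
  exact div_le_one_of_le₀ (one_sub_norm_sq_mul_norm_deriv_le hωd hωmaps hz)
    (one_sub_norm_sq_nonneg (hωmaps hz))

section SupComparison

variable {α : Type*} {s : Set α} {u v : α → ℝ} {c : ℝ}

lemma BddAbove.image_of_le_add (hu : BddAbove (u '' s)) (h : ∀ x ∈ s, v x ≤ u x + c) :
    BddAbove (v '' s) := by
  obtain ⟨M, hM⟩ := hu
  exact ⟨M + c, forall_mem_image.2 fun x hx =>
    (h x hx).trans (add_le_add_left (hM (mem_image_of_mem u hx)) c)⟩

lemma csSup_image_le_csSup_image_add (hs : s.Nonempty) (hu : BddAbove (u '' s))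
    (h : ∀ x ∈ s, v x ≤ u x + c) : sSup (v '' s) ≤ sSup (u '' s) + c :=
  csSup_le (hs.image v) <| forall_mem_image.2 fun x hx =>
    (h x hx).trans (add_le_add_left (le_csSup hu (mem_image_of_mem u hx)) c)

lemma bddAbove_image_iff_of_abs_sub_le (h : ∀ x ∈ s, |u x - v x| ≤ c) :
    BddAbove (u '' s) ↔ BddAbove (v '' s) :=
  ⟨fun hu => hu.image_of_le_add fun x hx => by linarith [(abs_sub_le_iff.1 (h x hx)).2],
    fun hv => hv.image_of_le_add fun x hx => by linarith [(abs_sub_le_iff.1 (h x hx)).1]⟩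

lemma abs_csSup_image_sub_csSup_image_le (hs : s.Nonempty) (hu : BddAbove (u '' s))
    (h : ∀ x ∈ s, |u x - v x| ≤ c) : |sSup (u '' s) - sSup (v '' s)| ≤ c := by
  have hv := (bddAbove_image_iff_of_abs_sub_le h).1 hu
  rw [abs_sub_le_iff]
  constructor
  · linarith [csSup_image_le_csSup_image_add hs hv fun x hx =>
      (by linarith [(abs_sub_le_iff.1 (h x hx)).1] : u x ≤ v x + c)]
  · linarith [csSup_image_le_csSup_image_add hs hu fun x hx =>
      (by linarith [(abs_sub_le_iff.1 (h x hx)).2] : v x ≤ u x + c)]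

end SupComparison


theorem preSchwarzian_norm_comparison_hg_general
    (h g : ℂ → ℂ)
    (hh : DifferentiableOn ℂ h (ball (0:ℂ) 1))
    (hg : DifferentiableOn ℂ g (ball (0:ℂ) 1))
    (hh'g0 : ∀ z ∈ ball (0:ℂ) 1, deriv h z * g z ≠ 0)
    (ω : ℂ → ℂ)
    (hω : ∀ z ∈ ball (0:ℂ) 1, ω z = deriv g z * h z / (deriv h z * g z))
    (hωmap : ∀ z ∈ ball (0:ℂ) 1, ‖ω z‖ < 1)
    (Pf Phg : ℂ → ℂ)
    (hPf : ∀ z ∈ ball (0:ℂ) 1,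
      Pf z = deriv (deriv h) z / deriv h z + deriv g z / g z -
        conj (ω z) * deriv ω z / (1 - (‖ω z‖ : ℂ)^2))
    (hPhg : ∀ z ∈ ball (0:ℂ) 1,
      Phg z = deriv (deriv (fun w => h w * g w)) z /
        deriv (fun w => h w * g w) z) :
    (∀ z ∈ ball (0:ℂ) 1, (1 - ‖z‖^2) * |‖Phg z‖ - ‖Pf z‖| ≤ 1) ∧
    (BddAbove {y : ℝ | ∃ z ∈ ball (0:ℂ) 1, y = (1 - ‖z‖^2) * ‖Pf z‖} ↔
      BddAbove {y : ℝ | ∃ z ∈ ball (0:ℂ) 1, y = (1 - ‖z‖^2) * ‖Phg z‖}) ∧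
    (BddAbove {y : ℝ | ∃ z ∈ ball (0:ℂ) 1, y = (1 - ‖z‖^2) * ‖Pf z‖} →
      |sSup {y : ℝ | ∃ z ∈ ball (0:ℂ) 1, y = (1 - ‖z‖^2) * ‖Pf z‖} -
        sSup {y : ℝ | ∃ z ∈ ball (0:ℂ) 1, y = (1 - ‖z‖^2) * ‖Phg z‖}| ≤ 1) := by
  have hωmaps : MapsTo ω (ball 0 1) (ball 0 1) := fun z hz => mem_ball_zero_iff.2 (hωmap z hz)
  have hpt : ∀ z ∈ ball (0:ℂ) 1, (1 - ‖z‖ ^ 2) * |‖Phg z‖ - ‖Pf z‖| ≤ 1 := fun z hz =>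
    (mul_le_mul_of_nonneg_left (abs_norm_sub_norm_le _ _) (one_sub_norm_sq_nonneg hz)).trans <| by
      rw [hPhg z hz, hPf z hz]
      exact one_sub_norm_sq_mul_norm_preSchwarzian_mul_sub_le hh hg hh'g0 hω hωmaps hz
  have hweighted : ∀ z ∈ ball (0:ℂ) 1,
      |(1 - ‖z‖ ^ 2) * ‖Pf z‖ - (1 - ‖z‖ ^ 2) * ‖Phg z‖| ≤ 1 := fun z hz => by
    rw [← mul_sub, abs_mul, abs_of_nonneg (one_sub_norm_sq_nonneg hz), abs_sub_comm]
    exact hpt z hz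
  have himage (F : ℂ → ℝ) : {y : ℝ | ∃ z ∈ ball (0:ℂ) 1, y = F z} = F '' ball 0 1 := by
    ext; simp [eq_comm]
  simp only [himage]
  exact ⟨hpt, bddAbove_image_iff_of_abs_sub_le hweighted,
    fun hbdd => abs_csSup_image_sub_csSup_image_le ⟨0, mem_ball_self one_pos⟩ hbdd hweighted⟩

theorem preSchwarzian_norm_comparison_hg
    (h g : ℂ → ℂ)
    (hh : DifferentiableOn ℂ h (ball (0:ℂ) 1))
    (hg : DifferentiableOn ℂ g (ball (0:ℂ) 1))
    (hh0 : ∀ z ∈ ball (0:ℂ) 1, h z ≠ 0)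
    (hg0 : ∀ z ∈ ball (0:ℂ) 1, g z ≠ 0)
    (hh'g0 : ∀ z ∈ ball (0:ℂ) 1, deriv h z * g z ≠ 0)
    (ω : ℂ → ℂ)
    (hω : ∀ z ∈ ball (0:ℂ) 1, ω z = deriv g z * h z / (deriv h z * g z))
    (hωmap : ∀ z ∈ ball (0:ℂ) 1, ‖ω z‖ < 1)
    (Pf Phg : ℂ → ℂ)
    (hPf : ∀ z ∈ ball (0:ℂ) 1,
      Pf z = deriv (deriv h) z / deriv h z + deriv g z / g z -
        conj (ω z) * deriv ω z / (1 - (‖ω z‖ : ℂ)^2))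
    (hPhg : ∀ z ∈ ball (0:ℂ) 1,
      Phg z = deriv (deriv (fun w => h w * g w)) z /
        deriv (fun w => h w * g w) z) :
    (∀ z ∈ ball (0:ℂ) 1, (1 - ‖z‖^2) * |‖Phg z‖ - ‖Pf z‖| ≤ 1) ∧
    (BddAbove {y : ℝ | ∃ z ∈ ball (0:ℂ) 1, y = (1 - ‖z‖^2) * ‖Pf z‖} ↔
      BddAbove {y : ℝ | ∃ z ∈ ball (0:ℂ) 1, y = (1 - ‖z‖^2) * ‖Phg z‖}) ∧
    (BddAbove {y : ℝ | ∃ z ∈ ball (0:ℂ) 1, y = (1 - ‖z‖^2) * ‖Pf z‖} →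
      |sSup {y : ℝ | ∃ z ∈ ball (0:ℂ) 1, y = (1 - ‖z‖^2) * ‖Pf z‖} -
        sSup {y : ℝ | ∃ z ∈ ball (0:ℂ) 1, y = (1 - ‖z‖^2) * ‖Phg z‖}| ≤ 1) :=
  preSchwarzian_norm_comparison_hg_general h g hh hg hh'g0 ω hω hωmap Pf Phg hPf hPhg
end

section
/- Let ω : 𝔻 → 𝔻 be holomorphic and satisfy (1 - |ω(z)|²)·ω''(z) + 2·ω'(z)²·conj(ω(z)) = 0 for all z in some open disk D ⊆ 𝔻. Then ω' ≡ 0 on D (and hence, if D is an open subset of the connected domain 𝔻, ω is constant on 𝔻 by the identity theorem). -/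
open Complex Metric ComplexConjugate

/-!
Since `‖ω‖² = ω · conj ω`, the equation reads `ω'' + conj ω · g = 0` with `g = 2ω'² - ωω''`.
Where `g ≠ 0`, `conj ω = -ω'' / g` is holomorphic, which forces `ω' = 0` nearby, hence
`ω'' = 0` and `g = 0` there: so `g` vanishes on the whole disk, then so do `ω''` and `ω'`.
The identity theorem spreads `ω' = 0` over the unit disk.
-/

open Filter Topology

theorem HasDerivAt.eq_zero_of_hasDerivAt_conj {f : ℂ → ℂ} {z a b : ℂ}
    (hf : HasDerivAt f a z) (hg : HasDerivAt (fun w => conj (f w)) b z) : a = 0 := by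
  have along (v : ℂ) : conj (a * v) = b * v := by
    have hline : HasDerivAt (fun t : ℝ => z + t * v) v 0 := by
      simpa using ((hasDerivAt_id (0:ℝ)).ofReal_comp.mul_const v).const_add z
    exact (hf.comp_of_eq (0:ℝ) hline (by simp)).star.unique
      (hg.comp_of_eq (0:ℝ) hline (by simp))
  have h₁ := along 1
  have hI := along I
  simp only [mul_one, map_mul, conj_I] at h₁ hI
  have h2I : 2 * I * conj a = 0 := by linear_combination I * h₁ - hI
  simpa using h2I

theorem deriv_eq_zero_of_conj_mul_eventuallyEq {f g k : ℂ → ℂ} {z : ℂ}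
    (hf : DifferentiableAt ℂ f z) (hg : DifferentiableAt ℂ g z) (hk : DifferentiableAt ℂ k z)
    (hgz : g z ≠ 0) (hfgk : ∀ᶠ w in 𝓝 z, conj (f w) * g w = k w) : deriv f z = 0 := by
  have hconj : (fun w => conj (f w)) =ᶠ[𝓝 z] fun w => k w / g w := by
    filter_upwards [hfgk, hg.continuousAt.eventually_ne hgz] with w hw hgw
    rw [eq_div_iff hgw, hw]
  exact hf.hasDerivAt.eq_zero_of_hasDerivAt_conj
    ((hk.div hg hgz).congr_of_eventuallyEq hconj).hasDerivAt

theorem deriv_eq_zero_of_dilatation_ode {f : ℂ → ℂ} {U : Set ℂ} (hU : IsOpen U)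
    (hf : AnalyticOnNhd ℂ f U)
    (hode : ∀ z ∈ U, (1 - (‖f z‖ : ℂ) ^ 2) * deriv (deriv f) z +
      2 * deriv f z ^ 2 * conj (f z) = 0) :
    ∀ z ∈ U, deriv f z = 0 := by
  set g : ℂ → ℂ := fun z => 2 * deriv f z ^ 2 - f z * deriv (deriv f) z with hg_def
  have hf' := hf.deriv
  have hf'' := hf'.deriv
  have hg : AnalyticOnNhd ℂ g U := fun z hz =>
    (analyticAt_const.mul ((hf' z hz).pow 2)).sub ((hf z hz).mul (hf'' z hz))
  have hconj : ∀ z ∈ U, conj (f z) * g z = -deriv (deriv f) z := fun z hz => by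
    have hnorm : (‖f z‖ : ℂ) ^ 2 = f z * conj (f z) := by
      rw [mul_conj, normSq_eq_norm_sq, ofReal_pow]
    linear_combination hode z hz + deriv (deriv f) z * hnorm
  have hg_zero : ∀ z ∈ U, g z = 0 := by
    intro z hz
    by_contra hgz
    have hderiv : deriv f =ᶠ[𝓝 z] 0 := by
      filter_upwards [hU.mem_nhds hz, (hg z hz).continuousAt.eventually_ne hgz] with w hw hgw
      exact deriv_eq_zero_of_conj_mul_eventuallyEq (hf w hw).differentiableAt
        (hg w hw).differentiableAt (hf'' w hw).differentiableAt.neg hgw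
        (eventually_of_mem (hU.mem_nhds hw) hconj)
    have hderiv2 : deriv (deriv f) z = 0 := by simp [hderiv.deriv_eq]
    exact hgz (by simp [hg_def, hderiv.eq_of_nhds, hderiv2])
  intro z hz
  have hderiv2 : deriv (deriv f) z = 0 := by simpa [hg_zero z hz] using (hconj z hz).symm
  simpa [hg_def, hderiv2] using hg_zero z hz

theorem dilatation_ode_forces_constant_general
    (ω : ℂ → ℂ) (hω : DifferentiableOn ℂ ω (ball (0:ℂ) 1))
    (z₀ : ℂ) (r : ℝ) (hr : 0 < r)
    (hD : ball z₀ r ⊆ ball (0:ℂ) 1)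
    (hode : ∀ z ∈ ball z₀ r,
      (1 - (‖ω z‖ : ℂ)^2) * deriv (deriv ω) z +
        2 * (deriv ω z)^2 * conj (ω z) = 0) :
    (∀ z ∈ ball z₀ r, deriv ω z = 0) ∧
    ∃ c : ℂ, ∀ z ∈ ball (0:ℂ) 1, ω z = c := by
  have hA : AnalyticOnNhd ℂ ω (ball 0 1) := hω.analyticOnNhd isOpen_ball
  have hD0 : ∀ z ∈ ball z₀ r, deriv ω z = 0 :=
    deriv_eq_zero_of_dilatation_ode isOpen_ball (hA.mono hD) hode
  have hdisk0 : Set.EqOn (deriv ω) 0 (ball 0 1) :=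
    hA.deriv.eqOn_zero_of_preconnected_of_eventuallyEq_zero (convex_ball 0 1).isPreconnected
      (hD (mem_ball_self hr)) (eventually_of_mem (isOpen_ball.mem_nhds (mem_ball_self hr)) hD0)
  exact ⟨hD0, isOpen_ball.exists_is_const_of_deriv_eq_zero (convex_ball 0 1).isPreconnected hω
    hdisk0⟩

theorem dilatation_ode_forces_constant
    (ω : ℂ → ℂ) (hω : DifferentiableOn ℂ ω (ball (0:ℂ) 1))
    (hωmap : ∀ z ∈ ball (0:ℂ) 1, ‖ω z‖ < 1)
    (z₀ : ℂ) (r : ℝ) (hr : 0 < r)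
    (hD : ball z₀ r ⊆ ball (0:ℂ) 1)
    (hode : ∀ z ∈ ball z₀ r,
      (1 - (‖ω z‖ : ℂ)^2) * deriv (deriv ω) z +
        2 * (deriv ω z)^2 * conj (ω z) = 0) :
    (∀ z ∈ ball z₀ r, deriv ω z = 0) ∧
    ∃ c : ℂ, ∀ z ∈ ball (0:ℂ) 1, ω z = c :=
  dilatation_ode_forces_constant_general ω hω z₀ r hr hD hode
end
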